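/- If σ : (𝒜,𝐬) ⇢ (𝒜',𝐬') is a rational quasi-cluster map with injection ι, then the exchange matrices are compatible: for i ∈ J_uf and j ∈ J̃, ε_{ij} = ε'_{ι(i)ι(j)}; moreover for i ∈ J_uf and j ∈ J' ∖ (S' ∪ ι(J̃)), ε'_{ι(i)j} = 0. -/

import Mathlib

open scoped BigOperators

/-- A (labeled) seed in an ambient field `K`: an index set `J`, a set of mutable (unfrozen)
vertices, cluster variables `A : J → K`, and an exchange matrix `ε` (with integer entries
in the rows and columns relevant to mutable vertices). -/
structure Seed (K : Type*) [Field K] (J : Type*) [Fintype J] [DecidableEq J] where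
  uf : Finset J
  A : J → K
  ε : J → J → ℤ

variable {K K' K'' : Type*} [Field K] [Field K'] [Field K'']
variable {J J' J'' : Type*} [Fintype J] [DecidableEq J] [Fintype J'] [DecidableEq J']
  [Fintype J''] [DecidableEq J'']

/-- The exchange ratio `X_i = ∏_j A_j^{ε_{ij}}` of a seed. -/
noncomputable def Seed.X (s : Seed K J) (i : J) : K := ∏ j, s.A j ^ s.ε i j

/-- A field embedding `σ : K → K'` is a *rational quasi-cluster map* from the seed `s` to the
seed `s'`, with data `(J̃, ι, S')`, if: `J_uf ⊆ J̃`; `ι` is injective on `J̃` and maps `J_uf`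
into `J'_uf`; `S' ⊆ J' ∖ ι(J̃)`; for `i ∈ J̃`, `σ(A_i)` equals `A'_{ι i}` times a Laurent
monomial in `{A'_j : j ∈ S'}`; for `i ∈ J_uf`, `σ(X_i) = X'_{ι i}`; and for `i ∉ J̃`,
`σ(A_i)` is a Laurent monomial in `{A'_j : j ∈ S'}`. -/
structure IsRQC (σ : K →+* K') (s : Seed K J) (s' : Seed K' J')
    (Jt : Finset J) (ι : J → J') (S' : Finset J') : Prop where
  uf_sub : s.uf ⊆ Jt
  inj : Set.InjOn ι ↑Jt
  maps_uf : ∀ i ∈ s.uf, ι i ∈ s'.uf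
  disj : ∀ j ∈ S', ∀ i ∈ Jt, ι i ≠ j
  laurent : ∀ i ∈ Jt, ∃ m : J' → ℤ,
    σ (s.A i) = s'.A (ι i) * ∏ j ∈ S', s'.A j ^ m j
  exch : ∀ i ∈ s.uf, σ (s.X i) = s'.X (ι i)
  frozen_mono : ∀ i, i ∉ Jt → ∃ m : J' → ℤ,
    σ (s.A i) = ∏ j ∈ S', s'.A j ^ m j

set_option linter.unusedSectionVars false in
lemma alg_indep_ne_zero {A : J' → K'} [CharZero K'] (hind : AlgebraicIndependent ℚ A) :
    ∀ j, A j ≠ 0 := by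
  intro j hz
  have h1 : (MvPolynomial.aeval (R := ℚ) A) (MvPolynomial.X j) =
      (MvPolynomial.aeval (R := ℚ) A) 0 := by simp [hz]
  exact MvPolynomial.X_ne_zero j (hind h1)

lemma exp_eq_exp {K' : Type*} [Field K'] [CharZero K'] {J' : Type*} [Fintype J'] [DecidableEq J']
    (A : J' → K') (hind : AlgebraicIndependent ℚ A) {e f : J' → ℤ}
    (h : ∏ j, A j ^ e j = ∏ j, A j ^ f j) : e = f := by
  have hA0 : ∀ j, A j ≠ 0 := alg_indep_ne_zero hind
  set d : J' → ℤ := fun j => e j - f j with hd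
  have hd1 : ∏ j, A j ^ d j = 1 := by
    rw [hd]
    simp only [zpow_sub₀ (hA0 _)]
    rw [Finset.prod_div_distrib, h, div_self]
    exact Finset.prod_ne_zero_iff.2 fun j _ => zpow_ne_zero _ (hA0 j)
  set n : J' → ℕ := fun j => (d j).toNat with hn
  set p : J' → ℕ := fun j => (-d j).toNat with hp
  have hnp : ∏ j, A j ^ n j = ∏ j, A j ^ p j := by
    have : ∏ j, A j ^ d j = (∏ j, A j ^ n j) / (∏ j, A j ^ p j) := by
      rw [← Finset.prod_div_distrib]
      refine Finset.prod_congr rfl fun j _ => ?_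
      rw [← zpow_natCast (A j) (n j), ← zpow_natCast (A j) (p j), ← zpow_sub₀ (hA0 j)]
      congr 1
      simp only [hn, hp]
      omega
    rw [hd1] at this
    have hQ : (∏ j, A j ^ p j) ≠ 0 := Finset.prod_ne_zero_iff.2 fun j _ => pow_ne_zero _ (hA0 j)
    exact ((div_eq_one_iff_eq hQ).1 this.symm)
  set sn := Finsupp.equivFunOnFinite.symm n with hsn
  set sp := Finsupp.equivFunOnFinite.symm p with hsp
  have key : ∀ (m : J' → ℕ), (MvPolynomial.aeval A)
      (MvPolynomial.monomial (R := ℚ) (Finsupp.equivFunOnFinite.symm m) 1) = ∏ j, A j ^ m j := by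
    intro m
    rw [← MvPolynomial.prod_X_pow_eq_monomial, map_prod]
    rw [Finset.prod_subset (Finset.subset_univ _)]
    · refine Finset.prod_congr rfl fun j _ => by simp
    · intro j _ hj
      simp [Finsupp.notMem_support_iff.1 hj]
  have hmono : (MvPolynomial.monomial (R := ℚ) sn 1) = MvPolynomial.monomial sp 1 := by
    apply hind
    rw [key, key, hnp]
  have := (MvPolynomial.monomial_left_injective (one_ne_zero (α := ℚ))) hmono
  have hnp' : n = p := Finsupp.equivFunOnFinite.symm.injective this
  funext j
  have : n j = p j := congrFun hnp' j
  simp only [hn, hp, hd] at this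
  omega

lemma zpow_sum₀ {a : K'} (ha : a ≠ 0) {β : Type*} (t : Finset β) (f : β → ℤ) :
    a ^ (∑ b ∈ t, f b) = ∏ b ∈ t, a ^ f b := by
  classical
  induction t using Finset.induction_on with
  | empty => simp
  | insert x t hx ih =>
    rw [Finset.sum_insert hx, Finset.prod_insert hx, zpow_add₀ ha, ih]

/-- **Exchange-matrix compatibility of a rational quasi-cluster map.**
If `σ : (𝒜,𝐬) ⇢ (𝒜',𝐬')` is rational quasi-cluster with data `(J̃, ι, S')`, and the cluster
variables of `𝐬'` are algebraically independent, then for `i ∈ J_uf` and `j ∈ J̃` one has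
`ε_{ij} = ε'_{ι(i) ι(j)}`; and for `i ∈ J_uf` and `j ∈ J' ∖ (S' ∪ ι(J̃))`, `ε'_{ι(i) j} = 0`. -/
theorem rqc_exchange_matrix_compat [CharZero K'] (σ : K →+* K')
    (s : Seed K J) (s' : Seed K' J') (Jt : Finset J) (ι : J → J') (S' : Finset J')
    (hind : AlgebraicIndependent ℚ s'.A)
    (h : IsRQC σ s s' Jt ι S') :
    (∀ i ∈ s.uf, ∀ j ∈ Jt, s.ε i j = s'.ε (ι i) (ι j)) ∧
    (∀ i ∈ s.uf, ∀ j : J', j ∉ S' → (∀ t ∈ Jt, ι t ≠ j) → s'.ε (ι i) j = 0) := by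
  classical
  have hA0 : ∀ j, s'.A j ≠ 0 := alg_indep_ne_zero hind
  -- express a Laurent monomial over S' as a product over all of J'
  have hSmono : ∀ (m : J' → ℤ),
      ∏ j ∈ S', s'.A j ^ m j = ∏ j', s'.A j' ^ (if j' ∈ S' then m j' else 0) := by
    intro m
    calc ∏ j ∈ S', s'.A j ^ m j
        = ∏ j ∈ S', s'.A j ^ (if j ∈ S' then m j else 0) :=
          Finset.prod_congr rfl (fun j hj => by rw [if_pos hj])
      _ = ∏ j', s'.A j' ^ (if j' ∈ S' then m j' else 0) :=
          Finset.prod_subset (Finset.subset_univ _) (fun x _ hx => by rw [if_neg hx, zpow_zero])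
  -- for each j, express σ (s.A j) as a Laurent monomial in all the A'_{j'}
  have key : ∀ j : J, ∃ e : J' → ℤ, σ (s.A j) = ∏ j', s'.A j' ^ e j' ∧
      ∀ j', j' ∉ S' → e j' = (if j ∈ Jt ∧ j' = ι j then 1 else 0) := by
    intro j
    by_cases hj : j ∈ Jt
    · obtain ⟨m, hm⟩ := h.laurent j hj
      refine ⟨fun j' => (if j' ∈ S' then m j' else 0) + (if j' = ι j then 1 else 0), ?_, ?_⟩
      · have hstep : ∀ j' : J', s'.A j' ^ ((if j' ∈ S' then m j' else 0) + (if j' = ι j then 1 else 0))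
            = s'.A j' ^ (if j' ∈ S' then m j' else 0) * s'.A j' ^ (if j' = ι j then (1:ℤ) else 0) :=
          fun j' => zpow_add₀ (hA0 j') _ _
      
        rw [hm, hSmono m]
        simp only [hstep]
        rw [Finset.prod_mul_distrib]
        rw [mul_comm (s'.A (ι j))]
        congr 1
        have : ∀ j' : J', s'.A j' ^ (if j' = ι j then (1:ℤ) else 0) =
            (if j' = ι j then s'.A j' else 1) := by
          intro j'; split <;> simp
        simp only [this]
        rw [Finset.prod_ite_eq' Finset.univ (ι j) s'.A]
        simp
      · intro j' hj'
        dsimp only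
        rw [if_neg hj']
        by_cases hq : j' = ι j
        · rw [if_pos hq, if_pos ⟨hj, hq⟩, zero_add]
        · rw [if_neg hq, if_neg (fun hc => hq hc.2), zero_add]
    · obtain ⟨m, hm⟩ := h.frozen_mono j hj
      refine ⟨fun j' => if j' ∈ S' then m j' else 0, ?_, ?_⟩
      · rw [hm, hSmono m]
      · intro j' hj'
        dsimp only
        rw [if_neg hj', if_neg (fun hc => hj hc.1)]
  choose e he hspec using key
  -- the central identity on exponents
  have hmain : ∀ i ∈ s.uf, ∀ j' : J', (∑ j, s.ε i j * e j j') = s'.ε (ι i) j' := by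
    intro i hi
    have hσX : σ (s.X i) = ∏ j', s'.A j' ^ (∑ j, s.ε i j * e j j') := by
      unfold Seed.X
      rw [map_prod]
      have h1 : ∀ j : J, σ (s.A j ^ s.ε i j) = ∏ j', s'.A j' ^ (s.ε i j * e j j') := by
        intro j
        rw [map_zpow₀, he j]
        rw [← Finset.prod_zpow]
        refine Finset.prod_congr rfl fun j' _ => ?_
        rw [mul_comm, zpow_mul]
      simp only [h1]
      rw [Finset.prod_comm]
      refine Finset.prod_congr rfl fun j' _ => ?_
      rw [zpow_sum₀ (hA0 j')]
    have hX' : σ (s.X i) = ∏ j', s'.A j' ^ s'.ε (ι i) j' := h.exch i hi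
    have := exp_eq_exp s'.A hind (hσX.symm.trans hX')
    exact fun j' => congrFun this j'
  constructor
  · intro i hi j₀ hj₀
    have hnotS : ι j₀ ∉ S' := fun hc => h.disj (ι j₀) hc j₀ hj₀ rfl
    have := hmain i hi (ι j₀)
    rw [← this]
    rw [Finset.sum_eq_single j₀]
    · rw [hspec j₀ (ι j₀) hnotS, if_pos ⟨hj₀, rfl⟩, mul_one]
    · intro b _ hb
      rw [hspec b (ι j₀) hnotS]
      by_cases hbJt : b ∈ Jt
      · rw [if_neg, mul_zero]
        rintro ⟨_, hc⟩
        exact hb (h.inj hbJt hj₀ hc.symm)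
      · rw [if_neg (fun hc => hbJt hc.1), mul_zero]
    · intro hc; exact absurd (Finset.mem_univ j₀) hc
  · intro i hi j' hj'S hj'ι
    have := hmain i hi j'
    rw [← this]
    refine Finset.sum_eq_zero fun b _ => ?_
    rw [hspec b j' hj'S]
    by_cases hbJt : b ∈ Jt
    · rw [if_neg, mul_zero]
      rintro ⟨_, hc⟩
      exact hj'ι b hbJt hc.symm
    · rw [if_neg (fun hc => hbJt hc.1), mul_zero]
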